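/- For any graph G and any densest subgraph H of G, the subdivision S(H) is a densest subgraph of S(G): ρ*(S(G)) = ρ(S(H)) = 2 m_H/(n_H + m_H). -/

import Mathlib

/-!
Let `ρ = m / n` be the density of `H`, the maximum density in `G`. A subgraph `K` of the
subdivision consists of a set `A` of original vertices, a set `B` of subdivision vertices and
incidences between them, so `|E(K)| ≤ |B₁| + |B₂|`, where `B₁ ⊆ B` are the edges with an end in
`A` and `B₂ ⊆ B₁` those with both ends in `A`. Maximality of `ρ`, applied to `B₂` on the
vertices `A`, and to `B₁` on `A` together with the at most `|B₁| - |B₂|` outer ends of `B₁`,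
gives `|B₂| ≤ ρ |A|` and `|B₁| ≤ ρ (|A| + |B₁| - |B₂|)`. Adding these, and using `|B₁| ≤ |B|`,
yields `|B₁| + |B₂| ≤ 2ρ / (1 + ρ) * (|A| + |B|)`. The subdivision of `H`, embedded in that of
`G`, attains `2m / (n + m) = 2ρ / (1 + ρ)`.
-/

open SimpleGraph

noncomputable def subgraphDensity {V : Type*} {G : SimpleGraph V} (H : G.Subgraph) : ℚ :=
  (H.edgeSet.ncard : ℚ) / (H.verts.ncard : ℚ)

def IsDensest {V : Type*} {G : SimpleGraph V} (H : G.Subgraph) : Prop :=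
  H.verts.Nonempty ∧ ∀ H' : G.Subgraph, H'.verts.Nonempty → subgraphDensity H' ≤ subgraphDensity H

noncomputable def graphDensity {V : Type*} (G : SimpleGraph V) : ℚ :=
  (G.edgeSet.ncard : ℚ) / (Nat.card V : ℚ)

def subdivide {V : Type*} (G : SimpleGraph V) : SimpleGraph (V ⊕ G.edgeSet) :=
  SimpleGraph.fromRel (fun a b =>
    match a, b with
    | Sum.inl v, Sum.inr e => v ∈ (e : Sym2 V)
    | _, _ => False)

open Finset

namespace SimpleGraph

variable {V W : Type*} {G : SimpleGraph V}

section Subdivision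

@[simp] lemma subdivide_adj_inl_inr {v : V} {e : G.edgeSet} :
    (subdivide G).Adj (.inl v) (.inr e) ↔ v ∈ (e : Sym2 V) := by
  simp [subdivide]

@[simp] lemma subdivide_adj_inr_inl {v : V} {e : G.edgeSet} :
    (subdivide G).Adj (.inr e) (.inl v) ↔ v ∈ (e : Sym2 V) := by
  simp [subdivide]

@[simp] lemma not_subdivide_adj_inl_inl {v w : V} : ¬(subdivide G).Adj (.inl v) (.inl w) := by
  simp [subdivide]

@[simp] lemma not_subdivide_adj_inr_inr {e e' : G.edgeSet} :
    ¬(subdivide G).Adj (.inr e) (.inr e') := by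
  simp [subdivide]

lemma edgeSet_subdivide [DecidableEq V] :
    (subdivide G).edgeSet =
      Set.range fun x : Σ e : G.edgeSet, (e : Sym2 V).toFinset => s(.inl x.2.1, .inr x.1) := by
  ext z
  induction z using Sym2.ind with
  | _ a b =>
    cases a <;> cases b <;> simp

lemma ncard_edgeSet_subdivide [Finite V] (G : SimpleGraph V) :
    (subdivide G).edgeSet.ncard = 2 * G.edgeSet.ncard := by
  classical
  cases nonempty_fintype V
  rw [edgeSet_subdivide, Set.ncard_range_of_injective, Nat.card_sigma,
    ← Nat.card_coe_set_eq, Nat.card_eq_fintype_card]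
  · simp only [Nat.card_eq_fintype_card, Fintype.card_coe,
      fun e : G.edgeSet ↦ Sym2.card_toFinset_of_not_isDiag _ (G.not_isDiag_of_mem_edgeSet e.2)]
    rw [sum_const, card_univ, smul_eq_mul, mul_comm]
  · rintro ⟨e, v, hv⟩ ⟨e', v', hv'⟩ h
    obtain ⟨rfl, rfl⟩ : v = v' ∧ e = e' := by simpa using h
    rfl

lemma graphDensity_subdivide [Finite V] (G : SimpleGraph V) :
    graphDensity (subdivide G) = 2 * G.edgeSet.ncard / (Nat.card V + G.edgeSet.ncard) := by
  rw [graphDensity, ncard_edgeSet_subdivide, Nat.card_sum, Nat.card_coe_set_eq]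
  push_cast
  rfl

def Hom.subdivide {G' : SimpleGraph W} (f : G' →g G) : subdivide G' →g subdivide G where
  toFun := Sum.map f f.mapEdgeSet
  map_rel' := by
    rintro (v | e) (w | e') h <;> simp_all [Hom.mapEdgeSet, Sym2.mem_map] <;> exact ⟨_, h, rfl⟩

lemma Hom.subdivide_injective {G' : SimpleGraph W} {f : G' →g G} (hf : Function.Injective f) :
    Function.Injective f.subdivide :=
  Sum.map_injective.2 ⟨hf, Hom.mapEdgeSet.injective f hf⟩

lemma subgraphDensity_map_top {G' : SimpleGraph W} {f : G' →g G} (hf : Function.Injective f) :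
    subgraphDensity ((⊤ : G'.Subgraph).map f) = graphDensity G' := by
  simp [subgraphDensity, graphDensity, Set.ncard_range_of_injective hf,
    Set.ncard_image_of_injective _ (Sym2.map.injective hf)]

lemma ncard_edgeSet_le_sum_card_inter [DecidableEq V] (K : (subdivide G).Subgraph)
    (s : Finset (V ⊕ G.edgeSet)) (hs : K.verts ⊆ s) :
    K.edgeSet.ncard ≤ ∑ e ∈ s.toRight, #((e : Sym2 V).toFinset ∩ s.toLeft) := by
  rw [← card_sigma]
  have hsub : K.edgeSet ⊆ ↑((s.toRight.sigma fun e ↦ (e : Sym2 V).toFinset ∩ s.toLeft).image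
      fun x ↦ s(Sum.inl x.2, Sum.inr x.1)) := by
    intro z hz
    induction z using Sym2.ind with
    | _ a b =>
      have hab := K.adj_sub hz
      have ha := hs (K.edge_vert hz)
      have hb := hs (K.edge_vert (K.adj_symm hz))
      cases a <;> cases b <;> simp_all
  exact (Set.ncard_le_ncard hsub (Finset.finite_toSet _)).trans
    ((Set.ncard_coe_finset _).trans_le card_image_le)

end Subdivision

namespace Subgraph

lemma ncard_edgeSet_coe (H : G.Subgraph) : H.coe.edgeSet.ncard = H.edgeSet.ncard := by
  rw [← image_coe_edgeSet_coe, Set.ncard_image_of_injective _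
    (Sym2.map.injective Subtype.val_injective)]

def ofEdges [DecidableEq V] (A : Finset V) (S : Finset G.edgeSet) : G.Subgraph where
  verts := ↑(A ∪ S.biUnion fun e ↦ (e : Sym2 V).toFinset)
  Adj x y := ∃ e ∈ S, (e : Sym2 V) = s(x, y)
  adj_sub := by
    rintro x y ⟨⟨e, he⟩, -, rfl⟩
    exact he
  edge_vert := by
    rintro x y ⟨⟨e, he⟩, heS, rfl⟩
    simp only [coe_union, coe_biUnion, Set.mem_union, Set.mem_iUnion]
    exact .inr ⟨⟨_, he⟩, heS, by simp⟩
  symm := ⟨fun _ _ ⟨e, heS, he⟩ ↦ ⟨e, heS, he.trans Sym2.eq_swap⟩⟩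

lemma ncard_edgeSet_ofEdges [DecidableEq V] (A : Finset V) (S : Finset G.edgeSet) :
    (ofEdges A S).edgeSet.ncard = #S := by
  have : (ofEdges A S).edgeSet = Subtype.val '' (S : Set G.edgeSet) := by
    ext z
    induction z using Sym2.ind with
    | _ a b => simp [ofEdges]
  rw [this, Set.ncard_image_of_injective _ Subtype.val_injective, Set.ncard_coe_finset]

lemma ncard_verts_ofEdges_le [DecidableEq V] (A : Finset V) (S : Finset G.edgeSet) :
    (ofEdges A S).verts.ncard ≤ #A + ∑ e ∈ S, #((e : Sym2 V).toFinset \ A) := by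
  have : A ∪ S.biUnion (fun e ↦ (e : Sym2 V).toFinset) =
      A ∪ S.biUnion (fun e ↦ (e : Sym2 V).toFinset \ A) := by
    ext
    simp only [mem_union, mem_biUnion, Sym2.mem_toFinset, mem_sdiff]
    tauto
  rw [ofEdges, Set.ncard_coe_finset, this]
  exact (card_union_le _ _).trans (Nat.add_le_add_left card_biUnion_le _)

end Subgraph

section Densest

variable [Finite V] {H : G.Subgraph}

lemma IsDensest.ncard_edgeSet_mul_le (hH : IsDensest H) (H' : G.Subgraph) :
    (H'.edgeSet.ncard : ℚ) * H.verts.ncard ≤ H.edgeSet.ncard * H'.verts.ncard := by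
  rcases H'.verts.eq_empty_or_nonempty with h | h
  · obtain rfl := H'.eq_bot_iff_verts_eq_empty.2 h
    simp
  · have hle := hH.2 H' h
    rwa [subgraphDensity, subgraphDensity, div_le_div_iff₀
      (mod_cast (Set.ncard_pos (Set.toFinite _)).2 h)
      (mod_cast (Set.ncard_pos (Set.toFinite _)).2 hH.1)] at hle

lemma IsDensest.card_mul_le [DecidableEq V] (hH : IsDensest H) (A : Finset V)
    (S : Finset G.edgeSet) :
    (#S : ℚ) * H.verts.ncard ≤
      H.edgeSet.ncard * (#A + ∑ e ∈ S, #((e : Sym2 V).toFinset \ A) : ℕ) := by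
  have hle := hH.ncard_edgeSet_mul_le (Subgraph.ofEdges A S)
  rw [Subgraph.ncard_edgeSet_ofEdges] at hle
  exact hle.trans (by gcongr; exact Subgraph.ncard_verts_ofEdges_le A S)

lemma IsDensest.sum_card_inter_mul_le [DecidableEq V] (hH : IsDensest H) (A : Finset V)
    (B : Finset G.edgeSet) :
    ((∑ e ∈ B, #((e : Sym2 V).toFinset ∩ A) : ℕ) : ℚ) * (H.verts.ncard + H.edgeSet.ncard) ≤
      2 * H.edgeSet.ncard * (#A + #B) := by
  set outside : G.edgeSet → ℕ := fun e ↦ #((e : Sym2 V).toFinset \ A)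
  have hsplit (e : G.edgeSet) : outside e + #((e : Sym2 V).toFinset ∩ A) = 2 := by
    rw [card_sdiff_add_card_inter, Sym2.card_toFinset_of_not_isDiag _
      (G.not_isDiag_of_mem_edgeSet e.2)]
  set B₂ := B.filter (outside · = 0)
  set B₁ := B.filter (outside · ≤ 1)
  have hinc : ∑ e ∈ B, #((e : Sym2 V).toFinset ∩ A) = #B₁ + #B₂ := by
    rw [card_filter, card_filter, ← sum_add_distrib]
    refine sum_congr rfl fun e _ ↦ ?_
    have := hsplit e
    split_ifs <;> omega
  have hout : ∑ e ∈ B₁, outside e + #B₂ = #B₁ := by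
    rw [sum_filter, card_filter, card_filter, ← sum_add_distrib]
    refine sum_congr rfl fun e _ ↦ ?_
    have := hsplit e
    split_ifs <;> omega
  have h₂ := hH.card_mul_le A B₂
  rw [sum_eq_zero fun e he ↦ (mem_filter.1 he).2] at h₂
  have h₁ := hH.card_mul_le A B₁
  have hout' : ((∑ e ∈ B₁, outside e : ℕ) : ℚ) = #B₁ - #B₂ := by
    rw [← hout]; push_cast; ring
  rw [Nat.cast_add, hout'] at h₁
  have hB₁ : (#B₁ : ℚ) ≤ #B := mod_cast card_filter_le _ _
  rw [hinc]
  push_cast at h₂ ⊢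
  linear_combination h₁ + h₂ + 2 * (H.edgeSet.ncard : ℚ) * hB₁

lemma IsDensest.subgraphDensity_subdivide_le (hH : IsDensest H) (K : (subdivide G).Subgraph)
    (hK : K.verts.Nonempty) :
    subgraphDensity K ≤ 2 * H.edgeSet.ncard / (H.verts.ncard + H.edgeSet.ncard) := by
  classical
  set s := (Set.toFinite K.verts).toFinset
  have hverts : K.verts.ncard = #s.toLeft + #s.toRight := by
    rw [card_toLeft_add_card_toRight, ← Set.ncard_coe_finset, Set.Finite.coe_toFinset]
  have hedges := Nat.cast_le (α := ℚ).2 (ncard_edgeSet_le_sum_card_inter K s (by simp [s]))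
  have hn : (0 : ℚ) < H.verts.ncard := mod_cast (Set.ncard_pos (Set.toFinite _)).2 hH.1
  rw [subgraphDensity, div_le_div_iff₀ (mod_cast (Set.ncard_pos (Set.toFinite _)).2 hK)
    (by positivity), hverts, Nat.cast_add]
  exact (mul_le_mul_of_nonneg_right hedges (by positivity)).trans
    (hH.sum_card_inter_mul_le s.toLeft s.toRight)

end Densest

end SimpleGraph

theorem stmt_19 {V : Type*} [Fintype V] (G : SimpleGraph V) (H : G.Subgraph)
    (hdense : IsDensest H) :
    (∀ K : (subdivide G).Subgraph, K.verts.Nonempty →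
      subgraphDensity K ≤ graphDensity (subdivide H.coe)) ∧
    (∃ K : (subdivide G).Subgraph, K.verts.Nonempty ∧
      subgraphDensity K = graphDensity (subdivide H.coe)) ∧
    graphDensity (subdivide H.coe) =
      2 * (H.edgeSet.ncard : ℚ) / ((H.verts.ncard : ℚ) + (H.edgeSet.ncard : ℚ)) := by
  have hdensity : graphDensity (subdivide H.coe) =
      2 * (H.edgeSet.ncard : ℚ) / ((H.verts.ncard : ℚ) + (H.edgeSet.ncard : ℚ)) := by
    rw [graphDensity_subdivide, Nat.card_coe_set_eq, H.ncard_edgeSet_coe]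
  refine ⟨fun K hK ↦ hdensity ▸ hdense.subgraphDensity_subdivide_le K hK,
    ⟨(⊤ : (subdivide H.coe).Subgraph).map H.hom.subdivide, ?_,
      subgraphDensity_map_top (Hom.subdivide_injective Subgraph.hom_injective)⟩, hdensity⟩
  obtain ⟨v, hv⟩ := hdense.1
  exact ⟨_, ⟨.inl ⟨v, hv⟩, trivial, rfl⟩⟩
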